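/- arXiv:0911.4917 — 2 statements merged into one kernel-verified Lean document; each statement's English description precedes it below -/
import Mathlib

section
/- Let Z be a random variable taking the value 1 with probability p, the value −1 with probability q, and the value 0 with probability 1 − p − q, where p > 0, q > 0 and p + q ≤ 1. Let μ = E(Z) = p − q. Then for every λ > 1/(1 − |μ|): Var(Z) < λ · E( |Z − μ|³ · exp(λ·|Z − μ|) ). -/
/-!
Write `d = |Z - μ|`. The difference of the two sides is `E[d² (l d e^{l d} - 1)]`,
and `l d e^{l d} ≥ l d (1 + l d) ≥ 2` as soon as `l d ≥ 1`. At `Z = ±1` we have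
`d ≥ 1 - |μ|`, so `l d > 1` there. The atom at `0`, where `d = |μ|`, can only
contribute negatively when `l |μ| < 1`; together with `l (1 - |μ|) > 1` this forces
`|μ| < 1/2`, and then the weight `(1 - p - q) μ²` of that atom is dominated by
`p (1 - μ)² + q (1 + μ)²`.
-/

open MeasureTheory Real

section FiniteRange

variable {Ω α : Type*} [MeasurableSpace Ω] [MeasurableSpace α] [MeasurableSingletonClass α]
  {P : Measure Ω} {Z : Ω → α}

theorem ae_mem_of_sum_measure_fiber_eq_one [IsProbabilityMeasure P] (hZ : Measurable Z)
    {s : Finset α} (hs : ∑ x ∈ s, P {ω | Z ω = x} = 1) : ∀ᵐ ω ∂P, Z ω ∈ s := by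
  have hpre : P (Z ⁻¹' s) = 1 := by
    rw [← sum_measure_preimage_singleton s fun x _ => hZ (measurableSet_singleton x)]
    exact hs
  refine (ae_iff_measure_eq (p := fun ω => Z ω ∈ s) (hZ s.measurableSet).nullMeasurableSet).2 ?_
  rw [measure_univ]
  exact hpre

theorem integral_comp_eq_sum_of_ae_mem {E : Type*} [NormedAddCommGroup E] [NormedSpace ℝ E]
    [CompleteSpace E] [IsFiniteMeasure P] (hZ : Measurable Z) {s : Finset α}
    (hs : ∀ᵐ ω ∂P, Z ω ∈ s) (f : α → E) :
    ∫ ω, f (Z ω) ∂P = ∑ x ∈ s, P.real {ω | Z ω = x} • f x := by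
  have hfiber (x : α) : MeasurableSet {ω | Z ω = x} := hZ (measurableSet_singleton x)
  have hae : (fun ω => f (Z ω)) =ᵐ[P]
      fun ω => ∑ x ∈ s, {ω | Z ω = x}.indicator (fun _ => f x) ω := by
    filter_upwards [hs] with ω hω
    classical
    simp only [Set.indicator_apply, Set.mem_ofPred_eq, Finset.sum_ite_eq, hω, if_true]
  rw [integral_congr_ae hae,
    integral_finsetSum s fun x _ => (integrable_const (f x)).indicator (hfiber x)]
  exact Finset.sum_congr rfl fun x _ => integral_indicator_const _ (hfiber x)

end FiniteRange

theorem two_mul_sq_le_mul_pow_three_mul_exp {l d : ℝ} (hld : 1 ≤ l * d) :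
    2 * d ^ 2 ≤ l * d ^ 3 * exp (l * d) := by
  have h2 : 2 ≤ l * d * (l * d + 1) := by nlinarith
  calc 2 * d ^ 2 ≤ d ^ 2 * (l * d * (l * d + 1)) := by nlinarith [sq_nonneg d]
    _ ≤ d ^ 2 * (l * d * exp (l * d)) := by gcongr; exact add_one_le_exp _
    _ = l * d ^ 3 * exp (l * d) := by ring

theorem mul_sq_sub_lt_of_abs_sub_lt_half {p q : ℝ} (hp : 0 < p) (hq : 0 < q)
    (h : |p - q| < 1 / 2) :
    (1 - p - q) * (p - q) ^ 2 < p * (1 - (p - q)) ^ 2 + q * (1 + (p - q)) ^ 2 := by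
  set m := |p - q| with hm
  have hms : m ≤ p + q := by rw [hm, abs_le]; constructor <;> linarith
  have hsq : (p - q) ^ 2 = m ^ 2 := (sq_abs _).symm
  have hdiff : p * (1 - (p - q)) ^ 2 + q * (1 + (p - q)) ^ 2 - (1 - p - q) * (p - q) ^ 2
      = (p + q) * (1 - m) * (1 - 2 * m) + 3 * m * (p + q - m) := by
    linear_combination (2 * (p + q) - 3) * hsq
  have hpos : 0 < (p + q) * (1 - m) * (1 - 2 * m) := by
    have := abs_nonneg (p - q)
    apply mul_pos (mul_pos _ _) _ <;> linarith
  have hnn : 0 ≤ 3 * m * (p + q - m) := mul_nonneg (by positivity) (by linarith)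
  linarith

theorem ternary_variance_lt {p q μ l : ℝ} (hp : 0 < p) (hq : 0 < q) (hpq : p + q ≤ 1)
    (hμ : μ = p - q) (hl : 1 / (1 - |μ|) < l) :
    p * (1 - μ) ^ 2 + q * (1 + μ) ^ 2 + (1 - p - q) * μ ^ 2 <
      l * (p * (1 - μ) ^ 3 * exp (l * (1 - μ)) + q * (1 + μ) ^ 3 * exp (l * (1 + μ))
        + (1 - p - q) * |μ| ^ 3 * exp (l * |μ|)) := by
  have hμ1 : |μ| < 1 := by rw [hμ, abs_lt]; constructor <;> linarith
  have hl1 : 1 < l * (1 - |μ|) := by rwa [div_lt_iff₀ (by linarith)] at hl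
  have hl0 : 0 < l := by nlinarith [abs_nonneg μ]
  have h₁ := two_mul_sq_le_mul_pow_three_mul_exp (l := l) (d := 1 - μ)
    (by nlinarith [le_abs_self μ])
  have h₂ := two_mul_sq_le_mul_pow_three_mul_exp (l := l) (d := 1 + μ)
    (by nlinarith [neg_abs_le μ])
  have hp₁ : 0 < p * (1 - μ) ^ 2 := by
    have := le_abs_self μ
    have : 0 < 1 - μ := by linarith
    positivity
  have hr : 0 ≤ 1 - p - q := by linarith
  rcases le_or_gt 1 (l * |μ|) with ht | ht
  · have h₀ := two_mul_sq_le_mul_pow_three_mul_exp ht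
    rw [sq_abs] at h₀
    have : 0 ≤ q * (1 + μ) ^ 2 + (1 - p - q) * μ ^ 2 := by positivity
    linarith [mul_le_mul_of_nonneg_left h₁ hp.le, mul_le_mul_of_nonneg_left h₂ hq.le,
      mul_le_mul_of_nonneg_left h₀ hr]
  · have hhalf : |p - q| < 1 / 2 := by rw [← hμ]; nlinarith
    have hw := mul_sq_sub_lt_of_abs_sub_lt_half hp hq hhalf
    rw [← hμ] at hw
    have h₀ : 0 ≤ (1 - p - q) * (l * |μ| ^ 3 * exp (l * |μ|)) := by positivity
    linarith [mul_le_mul_of_nonneg_left h₁ hp.le, mul_le_mul_of_nonneg_left h₂ hq.le]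

/-- let `Z` take the value `1` with probability `p`, `-1` with probability `q` and
`0` with probability `1 - p - q`, where `p, q > 0` and `p + q ≤ 1`, and let `μ = E(Z) = p - q`.
Then for every `l > 1/(1 - |μ|)`:
`Var(Z) < l · E(|Z - μ|³ e^{l|Z - μ|})`. -/
theorem stmt8 (Ω : Type) [MeasurableSpace Ω] (P : Measure Ω) [IsProbabilityMeasure P]
    (Z : Ω → ℝ) (hZm : Measurable Z)
    (p q : ℝ) (hp : 0 < p) (hq : 0 < q) (hpq : p + q ≤ 1)
    (h1 : P {ω | Z ω = 1} = ENNReal.ofReal p)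
    (h2 : P {ω | Z ω = -1} = ENNReal.ofReal q)
    (h0 : P {ω | Z ω = 0} = ENNReal.ofReal (1 - p - q))
    (μ : ℝ) (hμ : μ = p - q)
    (l : ℝ) (hl : 1 / (1 - |μ|) < l) :
    ∫ ω, (Z ω - μ)^2 ∂P < l * ∫ ω, |Z ω - μ|^3 * Real.exp (l * |Z ω - μ|) ∂P := by
  have hr : 0 ≤ 1 - p - q := by linarith
  have hae : ∀ᵐ ω ∂P, Z ω ∈ ({1, -1, 0} : Finset ℝ) := by
    refine ae_mem_of_sum_measure_fiber_eq_one hZm ?_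
    rw [Finset.sum_insert (by norm_num), Finset.sum_pair (by norm_num), h1, h2, h0,
      ← ENNReal.ofReal_add hq.le hr, ← ENNReal.ofReal_add hp.le (by positivity),
      show p + (q + (1 - p - q)) = 1 by ring, ENNReal.ofReal_one]
  have hμ1 : |μ| < 1 := by rw [hμ, abs_lt]; constructor <;> linarith
  rw [integral_comp_eq_sum_of_ae_mem hZm hae (fun z => (z - μ) ^ 2),
    integral_comp_eq_sum_of_ae_mem hZm hae (fun z => |z - μ| ^ 3 * exp (l * |z - μ|))]
  simp only [Finset.sum_insert (show (1 : ℝ) ∉ ({-1, 0} : Finset ℝ) by norm_num),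
    Finset.sum_pair (show (-1 : ℝ) ≠ 0 by norm_num), measureReal_def, h1, h2, h0,
    ENNReal.toReal_ofReal hp.le, ENNReal.toReal_ofReal hq.le, ENNReal.toReal_ofReal hr,
    smul_eq_mul]
  rw [abs_of_pos (by linarith [le_abs_self μ] : (0 : ℝ) < 1 - μ),
    show (-1 : ℝ) - μ = -(1 + μ) by ring, abs_neg,
    abs_of_pos (by linarith [neg_abs_le μ] : (0 : ℝ) < 1 + μ), zero_sub, abs_neg, neg_sq]
  linarith [ternary_variance_lt hp hq hpq hμ hl]
end

section
/- Let w = (w_1,…,w_n) be a word over the two-letter ordered alphabet {α_1 < α_2}. Then the length of the longest nondecreasing subsequence of w equals max_{0≤k≤n} ( #{i ≤ k : w_i = α_1} + #{i > k : w_i = α_2} ). Equivalently, setting Z_i = 1 if w_i = α_1 and Z_i = −1 if w_i = α_2, and S_k = Z_1 + ⋯ + Z_k (S_0 = 0), the length of the longest nondecreasing subsequence equals n/2 + max_{0≤k≤n} S_k − S_n/2. -/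
/-!
A nondecreasing subsequence of a `0`/`1` word is a block of `0`s followed by a block of `1`s, so
it lies inside the set of all `0`s before some cut `k` and all `1`s from `k` on; these sets are
nondecreasing themselves, so the longest length is the largest of their sizes. Writing
`[w i = 0] = (1 + Z i) / 2` and `[w i = 1] = (1 - Z i) / 2`, the size of the set cut at `k` is
`n / 2 + S k - S n / 2`.
-/

/-- The length of the longest nondecreasing subsequence of `w 0, w 1, …, w (n-1)`. -/
def LI (n : ℕ) (w : ℕ → ℕ) : ℕ :=
  ((Finset.range n).powerset.filter
    (fun s => ∀ i ∈ s, ∀ j ∈ s, i ≤ j → w i ≤ w j)).sup Finset.card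

open Finset

def splitSet (n : ℕ) (w : ℕ → ℕ) (k : ℕ) : Finset ℕ :=
  (range n).filter fun i => (i < k ∧ w i = 0) ∨ (k ≤ i ∧ w i = 1)

lemma card_splitSet (n : ℕ) (w : ℕ → ℕ) (k : ℕ) :
    (splitSet n w k).card = ((range n).filter fun i => i < k ∧ w i = 0).card
      + ((range n).filter fun i => k ≤ i ∧ w i = 1).card := by
  rw [splitSet, filter_or, card_union_of_disjoint]
  exact disjoint_filter.2 fun _ _ _ _ => by omega

lemma card_splitSet_le_LI (n : ℕ) (w : ℕ → ℕ) (k : ℕ) :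
    (splitSet n w k).card ≤ LI n w := by
  refine le_sup (mem_filter.2 ⟨mem_powerset.2 (filter_subset _ _), ?_⟩)
  intro i hi j hj _
  simp only [splitSet, mem_filter] at hi hj
  omega

lemma exists_subset_splitSet {n : ℕ} {w : ℕ → ℕ} (hw : ∀ i, w i < 2) {s : Finset ℕ}
    (hs : s ⊆ range n) (hmono : ∀ i ∈ s, ∀ j ∈ s, i ≤ j → w i ≤ w j) :
    ∃ k ≤ n, s ⊆ splitSet n w k := by
  set k := (s.filter fun i => w i = 0).sup (· + 1)
  have hk : k ≤ n := Finset.sup_le fun i hi => mem_range.1 (hs (mem_filter.1 hi).1)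
  refine ⟨k, hk, fun i hi => mem_filter.2 ⟨hs hi, ?_⟩⟩
  obtain h0 | h1 : w i = 0 ∨ w i = 1 := by have := hw i; omega
  · exact Or.inl ⟨le_sup (f := (· + 1)) (mem_filter.2 ⟨hi, h0⟩), h0⟩
  · refine Or.inr ⟨Finset.sup_le fun j hj => ?_, h1⟩
    obtain ⟨hjs, hj0⟩ := mem_filter.1 hj
    by_contra! hij
    have := hmono i hi j hjs (by omega)
    omega

lemma LI_eq_sup_card_splitSet {n : ℕ} {w : ℕ → ℕ} (hw : ∀ i, w i < 2) :
    LI n w = (range (n + 1)).sup fun k => (splitSet n w k).card := by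
  refine le_antisymm (Finset.sup_le fun s hs => ?_)
    (Finset.sup_le fun k _ => card_splitSet_le_LI n w k)
  obtain ⟨hsub, hmono⟩ := mem_filter.1 hs
  obtain ⟨k, hk, hsk⟩ := exists_subset_splitSet hw (mem_powerset.1 hsub) hmono
  exact (card_le_card hsk).trans
    (le_sup (f := fun k => (splitSet n w k).card) (mem_range.2 (Nat.lt_succ_of_le hk)))

lemma cast_card_splitSet {n : ℕ} {w : ℕ → ℕ} (hw : ∀ i, w i < 2) {k : ℕ} (hk : k ≤ n) :
    ((splitSet n w k).card : ℝ) = n / 2 + ∑ i ∈ range k, (if w i = 0 then (1 : ℝ) else -1)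
      - (∑ i ∈ range n, (if w i = 0 then (1 : ℝ) else -1)) / 2 := by
  set Z : ℕ → ℝ := fun i => if w i = 0 then 1 else -1
  have hterm : ∀ i, (if (i < k ∧ w i = 0) ∨ (k ≤ i ∧ w i = 1) then (1 : ℝ) else 0)
      = 1 / 2 - Z i / 2 + if i < k then Z i else 0 := by
    intro i
    have := hw i
    simp only [Z]
    split_ifs <;> first | omega | norm_num
  have hprefix : ∑ i ∈ range n, (if i < k then Z i else 0) = ∑ i ∈ range k, Z i := by
    rw [← sum_filter]
    congr 1
    ext i
    simp only [mem_filter, mem_range]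
    omega
  rw [splitSet, natCast_card_filter, sum_congr rfl fun i _ => hterm i, sum_add_distrib,
    sum_sub_distrib, hprefix, sum_const, card_range, nsmul_eq_mul, ← sum_div]
  ring

/-- for a binary word `w` (letters `0 < 1`) of length `n`, the length of the
longest nondecreasing subsequence equals
`max_{0≤k≤n} (#{i < k : w_i = 0} + #{k ≤ i < n : w_i = 1})`; equivalently, with
`Z_i = 1` if `w_i = 0` and `Z_i = -1` if `w_i = 1`, and `S_k = Z_1 + ⋯ + Z_k`, it equals
`n/2 + max_{0≤k≤n} S_k - S_n/2`. -/
theorem stmt11 (n : ℕ) (w : ℕ → ℕ) (hw : ∀ i, w i < 2) :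
    LI n w = ((Finset.range (n+1)).sup (fun k =>
        ((Finset.range n).filter (fun i => i < k ∧ w i = 0)).card
        + ((Finset.range n).filter (fun i => k ≤ i ∧ w i = 1)).card))
    ∧ (LI n w : ℝ) = (n : ℝ) / 2
        + ((Finset.range (n+1)).sup' Finset.nonempty_range_add_one
            (fun k => ∑ i ∈ Finset.range k, (if w i = 0 then (1 : ℝ) else -1)))
        - (∑ i ∈ Finset.range n, (if w i = 0 then (1 : ℝ) else -1)) / 2 := by
  have hLI := LI_eq_sup_card_splitSet (n := n) hw
  refine ⟨hLI.trans (Finset.sup_congr rfl fun k _ => card_splitSet n w k), ?_⟩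
  set S : ℕ → ℝ := fun k => ∑ i ∈ range k, (if w i = 0 then (1 : ℝ) else -1)
  set shift : ℝ → ℝ := fun x => n / 2 + x - S n / 2
  have hshift : Monotone shift := fun x y hxy => by simpa [shift] using hxy
  rw [hLI, ← sup'_eq_sup nonempty_range_add_one, apply_sup'_eq_sup'_comp _ _ Nat.cast_max]
  refine (sup'_congr _ rfl fun k hk => ?_).trans
    (apply_sup'_eq_sup'_comp _ shift fun x y => hshift.map_max).symm
  exact cast_card_splitSet hw (Nat.lt_succ_iff.1 (mem_range.1 hk))
end
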